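/- In the graph consensus setting, suppose Γ is connected, each A_i is invertible, and there exist γ_i > 0 with yᵀA_i⁻¹y ≥ γ_i‖y‖² for all y ∈ ℝ^d; set γ_min = min_i γ_i and α_max = max_i α_i. Let μ > 0 satisfy Σ_{{i,j}∈E(Γ)} ‖y_i − y_j‖² ≤ μ Σ_{i=1}^n ‖y_i‖² for all (y_1,…,y_n) ∈ (ℝ^d)^n, and assume 0 < α_max < 2γ_min/μ. Then the matrix S := Σ_{i=1}^n α_i⁻¹ A_i⁻¹ is invertible, and for every initial state (x_1(0),…,x_n(0)) the sequence (x_1(k),…,x_n(k)) converges as k → ∞ to the consensus (x*, …, x*) with x* = S⁻¹ ( Σ_{i=1}^n α_i⁻¹ A_i⁻¹ x_i(0) ). -/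

import Mathlib

open Matrix BigOperators Filter Finset

/-- The Euclidean norm on `Fin d → ℝ`. -/
noncomputable def eucNorm {d : ℕ} (v : Fin d → ℝ) : ℝ := Real.sqrt (∑ a, v a ^ 2)

section helpers
variable {n : ℕ} (Γ : SimpleGraph (Fin n)) [DecidableRel Γ.Adj]

lemma swap_adj_sum {M : Type*} [AddCommMonoid M] (g : Fin n → Fin n → M) :
    ∑ i, ∑ j ∈ Finset.univ.filter (fun j => Γ.Adj i j), g i j
      = ∑ i, ∑ j ∈ Finset.univ.filter (fun j => Γ.Adj i j), g j i := by
  simp only [Finset.sum_filter]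
  rw [Finset.sum_comm]
  refine Finset.sum_congr rfl fun i _ => Finset.sum_congr rfl fun j _ => ?_
  by_cases h : Γ.Adj i j
  · simp [h, h.symm]
  · have h2 : ¬ Γ.Adj j i := fun h' => h h'.symm
    simp [h, h2]

lemma half_adj_sum (g : Fin n → Fin n → ℝ) (hsym : ∀ i j, g i j = g j i) :
    ∑ i, ∑ j ∈ Finset.univ.filter (fun j => Γ.Adj i j), g i j
      = 2 * ∑ i, ∑ j ∈ Finset.univ.filter (fun j => i < j ∧ Γ.Adj i j), g i j := by
  have split : ∀ i : Fin n,
      ∑ j ∈ Finset.univ.filter (fun j => Γ.Adj i j), g i j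
        = (∑ j ∈ Finset.univ.filter (fun j => i < j ∧ Γ.Adj i j), g i j)
          + ∑ j ∈ Finset.univ.filter (fun j => j < i ∧ Γ.Adj i j), g i j := by
    intro i
    simp only [Finset.sum_filter, ← Finset.sum_add_distrib]
    refine Finset.sum_congr rfl fun j _ => ?_
    by_cases h : Γ.Adj i j
    · have hne : i ≠ j := Γ.ne_of_adj h
      rcases lt_or_gt_of_ne hne with hlt | hgt
      · simp [h, hlt, not_lt_of_gt hlt]
      · simp [h, hgt, not_lt_of_gt hgt]
    · simp [h]
  rw [Finset.sum_congr rfl fun i _ => split i, Finset.sum_add_distrib]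
  have : ∑ i, ∑ j ∈ Finset.univ.filter (fun j => j < i ∧ Γ.Adj i j), g i j
      = ∑ i, ∑ j ∈ Finset.univ.filter (fun j => i < j ∧ Γ.Adj i j), g i j := by
    simp only [Finset.sum_filter]
    rw [Finset.sum_comm]
    refine Finset.sum_congr rfl fun i _ => Finset.sum_congr rfl fun j _ => ?_
    by_cases h : Γ.Adj i j
    · simp [h, h.symm, hsym i j]
    · have h2 : ¬ Γ.Adj j i := fun h' => h h'.symm
      simp [h, h2]
  rw [this]; ring

omit [DecidableRel Γ.Adj] in
lemma conn_eq {β : Type*} (hconn : Γ.Connected) (y : Fin n → β)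
    (h : ∀ i j, Γ.Adj i j → y i = y j) (i j : Fin n) : y i = y j := by
  obtain ⟨w⟩ := hconn i j
  induction w with
  | nil => rfl
  | cons h' p ih => exact (h _ _ h').trans ih

end helpers

noncomputable section C14
variable {n d : ℕ} (Γ : SimpleGraph (Fin n)) [DecidableRel Γ.Adj]
  (A : Fin n → Matrix (Fin d) (Fin d) ℝ) (α : Fin n → ℝ)

def c14sq (v : Fin d → ℝ) : ℝ := ∑ a, v a ^ 2

def c14e (y : Fin n → Fin d → ℝ) (i : Fin n) : Fin d → ℝ :=
  ∑ j ∈ Γ.neighborFinset i, (y i - y j)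

def c14T (y : Fin n → Fin d → ℝ) (i : Fin n) : Fin d → ℝ :=
  y i - α i • (A i).mulVec (c14e Γ y i)

def c14N2 (y : Fin n → Fin d → ℝ) : ℝ := ∑ i, c14sq (y i)

def c14V (y : Fin n → Fin d → ℝ) : ℝ :=
  ∑ i, ∑ j ∈ Finset.univ.filter (fun j => i < j ∧ Γ.Adj i j), c14sq (y i - y j)

def c14S (y : Fin n → Fin d → ℝ) : Fin d → ℝ :=
  ∑ i, (α i)⁻¹ • (A i)⁻¹.mulVec (y i)

lemma c14sq_nonneg (v : Fin d → ℝ) : 0 ≤ c14sq v :=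
  Finset.sum_nonneg fun a _ => sq_nonneg _

lemma c14sq_eq_zero {v : Fin d → ℝ} (h : c14sq v = 0) : v = 0 := by
  funext a
  have := (Finset.sum_eq_zero_iff_of_nonneg (fun a _ => sq_nonneg (v a))).1 h a (Finset.mem_univ a)
  simpa using pow_eq_zero_iff (n := 2) (by norm_num) |>.1 this

lemma c14sq_smul (c : ℝ) (v : Fin d → ℝ) : c14sq (c • v) = c ^ 2 * c14sq v := by
  simp [c14sq, Finset.mul_sum, mul_pow]

lemma enorm_sq (v : Fin d → ℝ) : eucNorm v ^ 2 = c14sq v :=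
  Real.sq_sqrt (Finset.sum_nonneg fun a _ => sq_nonneg _)

lemma c14sq_dot (v : Fin d → ℝ) : v ⬝ᵥ v = c14sq v := by
  simp [c14sq, dotProduct, sq]

lemma c14dot_sum {s : Finset (Fin n)} (u : Fin d → ℝ) (w : Fin n → Fin d → ℝ) :
    u ⬝ᵥ (∑ j ∈ s, w j) = ∑ j ∈ s, u ⬝ᵥ w j := by
  simp [dotProduct, Finset.mul_sum]
  exact Finset.sum_comm

lemma c14sq_add (u w : Fin d → ℝ) :
    c14sq (u + w) = c14sq u + 2 * (u ⬝ᵥ w) + c14sq w := by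
  simp only [c14sq, dotProduct, Finset.mul_sum, ← Finset.sum_add_distrib]
  exact Finset.sum_congr rfl fun a _ => by simp [Pi.add_apply]; ring

lemma c14e_smul (c : ℝ) (y : Fin n → Fin d → ℝ) (i : Fin n) :
    c14e Γ (c • y) i = c • c14e Γ y i := by
  simp [c14e, Finset.smul_sum, smul_sub]

lemma c14T_smul (c : ℝ) (y : Fin n → Fin d → ℝ) :
    c14T Γ A α (c • y) = c • c14T Γ A α y := by
  funext i
  simp [c14T, c14e_smul, Matrix.mulVec_smul, smul_sub, smul_comm c (α i)]

lemma c14N2_smul (c : ℝ) (y : Fin n → Fin d → ℝ) :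
    c14N2 (c • y) = c ^ 2 * c14N2 y := by
  simp [c14N2, c14sq_smul, Finset.mul_sum]

lemma c14V_smul (c : ℝ) (y : Fin n → Fin d → ℝ) :
    c14V Γ (c • y) = c ^ 2 * c14V Γ y := by
  simp only [c14V, Finset.mul_sum]
  refine Finset.sum_congr rfl fun i _ => Finset.sum_congr rfl fun j _ => ?_
  rw [show (c • y) i - (c • y) j = c • (y i - y j) by simp [smul_sub], c14sq_smul]

lemma c14V_nonneg (y : Fin n → Fin d → ℝ) : 0 ≤ c14V Γ y :=
  Finset.sum_nonneg fun i _ => Finset.sum_nonneg fun j _ => c14sq_nonneg _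

lemma c14N2_nonneg (y : Fin n → Fin d → ℝ) : 0 ≤ c14N2 y :=
  Finset.sum_nonneg fun i _ => c14sq_nonneg _

lemma c14e_eq (y : Fin n → Fin d → ℝ) (i : Fin n) :
    c14e Γ y i = ∑ j ∈ Finset.univ.filter (fun j => Γ.Adj i j), (y i - y j) := by
  rw [c14e, SimpleGraph.neighborFinset_eq_filter]

lemma c14e_sum (y : Fin n → Fin d → ℝ) : ∑ i, c14e Γ y i = 0 := by
  have h := swap_adj_sum Γ (fun i j => y i - y j)
  have h2 : ∑ i, ∑ j ∈ Finset.univ.filter (fun j => Γ.Adj i j), (y i - y j)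
      = - ∑ i, ∑ j ∈ Finset.univ.filter (fun j => Γ.Adj i j), (y i - y j) := by
    nth_rewrite 1 [h]
    simp [← Finset.sum_neg_distrib, neg_sub]
  set s2 := ∑ i, ∑ j ∈ Finset.univ.filter (fun j => Γ.Adj i j), (y i - y j) with hs2
  have h4 : (2:ℝ) • s2 = 0 := by
    rw [two_smul]
    nth_rewrite 1 [h2]
    simp
  have h3 : s2 = 0 := by
    rcases smul_eq_zero.1 h4 with h | h
    · norm_num at h
    · exact h
  rw [← h3]
  exact Finset.sum_congr rfl fun i _ => c14e_eq Γ y i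

-- continuity helpers
lemma c14e_cont (i : Fin n) : Continuous fun y : Fin n → Fin d → ℝ => c14e Γ y i := by
  unfold c14e
  exact continuous_finset_sum _ fun j _ => (continuous_apply i).sub (continuous_apply j)

lemma mulVec_cont (M : Matrix (Fin d) (Fin d) ℝ) :
    Continuous fun v : Fin d → ℝ => M.mulVec v :=
  LinearMap.continuous_of_finiteDimensional M.mulVecLin

lemma c14sq_neg (v : Fin d → ℝ) : c14sq (-v) = c14sq v := by
  simp [c14sq]

lemma c14W_eq (y : Fin n → Fin d → ℝ) :
    ∑ i, ∑ j ∈ Finset.univ.filter (fun j => Γ.Adj i j), c14sq (y i - y j)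
      = 2 * c14V Γ y := by
  exact half_adj_sum Γ _ fun i j => by rw [show y i - y j = -(y j - y i) by abel, c14sq_neg]

lemma c14dot_sum' {s : Finset (Fin n)} (u : Fin d → ℝ) (w : Fin n → Fin d → ℝ) :
    (∑ j ∈ s, w j) ⬝ᵥ u = ∑ j ∈ s, w j ⬝ᵥ u := by
  rw [dotProduct_comm, c14dot_sum]
  exact Finset.sum_congr rfl fun j _ => dotProduct_comm _ _

lemma c14V_eq_dot (y : Fin n → Fin d → ℝ) :
    c14V Γ y = ∑ i, y i ⬝ᵥ c14e Γ y i := by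
  have key : ∑ i, ∑ j ∈ Finset.univ.filter (fun j => Γ.Adj i j), c14sq (y i - y j)
      = 2 * ∑ i, y i ⬝ᵥ c14e Γ y i := by
    have e1 : ∀ i j : Fin n, c14sq (y i - y j)
        = y i ⬝ᵥ (y i - y j) - y j ⬝ᵥ (y i - y j) := by
      intro i j
      rw [← c14sq_dot, sub_dotProduct]
    have e2 : ∑ i, ∑ j ∈ Finset.univ.filter (fun j => Γ.Adj i j), y j ⬝ᵥ (y i - y j)
        = - ∑ i, ∑ j ∈ Finset.univ.filter (fun j => Γ.Adj i j), y i ⬝ᵥ (y i - y j) := by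
      rw [swap_adj_sum Γ (fun i j => y j ⬝ᵥ (y i - y j))]
      rw [← Finset.sum_neg_distrib]
      refine Finset.sum_congr rfl fun i _ => ?_
      rw [← Finset.sum_neg_distrib]
      refine Finset.sum_congr rfl fun j _ => ?_
      rw [show y j - y i = -(y i - y j) by abel, dotProduct_neg]
    calc ∑ i, ∑ j ∈ Finset.univ.filter (fun j => Γ.Adj i j), c14sq (y i - y j)
        = ∑ i, ∑ j ∈ Finset.univ.filter (fun j => Γ.Adj i j),
            (y i ⬝ᵥ (y i - y j) - y j ⬝ᵥ (y i - y j)) := by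
          exact Finset.sum_congr rfl fun i _ => Finset.sum_congr rfl fun j _ => e1 i j
      _ = (∑ i, ∑ j ∈ Finset.univ.filter (fun j => Γ.Adj i j), y i ⬝ᵥ (y i - y j))
            - ∑ i, ∑ j ∈ Finset.univ.filter (fun j => Γ.Adj i j), y j ⬝ᵥ (y i - y j) := by
          simp [Finset.sum_sub_distrib]
      _ = 2 * ∑ i, ∑ j ∈ Finset.univ.filter (fun j => Γ.Adj i j), y i ⬝ᵥ (y i - y j) := by
          rw [e2]; ring
      _ = 2 * ∑ i, y i ⬝ᵥ c14e Γ y i := by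
          congr 1
          refine Finset.sum_congr rfl fun i _ => ?_
          rw [c14e_eq, c14dot_sum]
  linarith [key, c14W_eq Γ y]

lemma c14_decrease
    (hinv : ∀ i, IsUnit (A i)) (hα : ∀ i, 0 < α i)
    (γ : Fin n → ℝ)
    (hquad : ∀ (i : Fin n) (v : Fin d → ℝ), γ i * eucNorm v ^ 2 ≤ v ⬝ᵥ (A i)⁻¹.mulVec v)
    (γmin αmax : ℝ) (hγle : ∀ i, γmin ≤ γ i) (hαle : ∀ i, α i ≤ αmax)
    (hγ0 : 0 ≤ γmin)
    (μ : ℝ)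
    (hμb : ∀ w : Fin n → Fin d → ℝ, c14V Γ w ≤ μ * c14N2 w)
    (y : Fin n → Fin d → ℝ) :
    c14V Γ (c14T Γ A α y) + (2 * γmin / αmax - μ) * ∑ i, c14sq (c14T Γ A α y i - y i)
      ≤ c14V Γ y := by
  classical
  set z : Fin n → Fin d → ℝ := fun i => (A i).mulVec (c14e Γ y i) with hz
  set δ : Fin n → Fin d → ℝ := fun i => -(α i • z i) with hδdef
  have hδ : ∀ i, c14T Γ A α y i = y i + δ i := fun i => by
    simp [c14T, hδdef, hz, sub_eq_add_neg]
  have hTd : ∀ i, c14T Γ A α y i - y i = δ i := fun i => by rw [hδ i]; abel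
  -- expansion
  have expand : ∀ i j : Fin n, c14sq (c14T Γ A α y i - c14T Γ A α y j)
      = c14sq (y i - y j) + 2 * ((y i - y j) ⬝ᵥ (δ i - δ j)) + c14sq (δ i - δ j) := by
    intro i j
    rw [hδ i, hδ j, show (y i + δ i) - (y j + δ j) = (y i - y j) + (δ i - δ j) by abel,
      c14sq_add]
  set C : ℝ := ∑ i, ∑ j ∈ Finset.univ.filter (fun j => Γ.Adj i j),
    ((y i - y j) ⬝ᵥ (δ i - δ j)) with hC
  have hW : 2 * c14V Γ (c14T Γ A α y) = 2 * c14V Γ y + 2 * C + 2 * c14V Γ δ := by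
    rw [← c14W_eq, ← c14W_eq, ← c14W_eq, hC]
    rw [Finset.sum_congr rfl fun i _ => Finset.sum_congr rfl fun j _ => expand i j]
    simp only [Finset.sum_add_distrib, Finset.mul_sum]
  -- cross term
  have hCross : C = 2 * ∑ i, c14e Γ y i ⬝ᵥ δ i := by
    have h1 : C = (∑ i, ∑ j ∈ Finset.univ.filter (fun j => Γ.Adj i j),
        (y i - y j) ⬝ᵥ δ i)
        - ∑ i, ∑ j ∈ Finset.univ.filter (fun j => Γ.Adj i j), (y i - y j) ⬝ᵥ δ j := by
      rw [hC, ← Finset.sum_sub_distrib]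
      refine Finset.sum_congr rfl fun i _ => ?_
      rw [← Finset.sum_sub_distrib]
      exact Finset.sum_congr rfl fun j _ => dotProduct_sub _ _ _
    have h2 : ∑ i, ∑ j ∈ Finset.univ.filter (fun j => Γ.Adj i j), (y i - y j) ⬝ᵥ δ j
        = - ∑ i, ∑ j ∈ Finset.univ.filter (fun j => Γ.Adj i j), (y i - y j) ⬝ᵥ δ i := by
      rw [swap_adj_sum Γ (fun i j => (y i - y j) ⬝ᵥ δ j), ← Finset.sum_neg_distrib]
      refine Finset.sum_congr rfl fun i _ => ?_
      rw [← Finset.sum_neg_distrib]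
      refine Finset.sum_congr rfl fun j _ => ?_
      rw [show y j - y i = -(y i - y j) by abel, neg_dotProduct]
    have h3 : ∀ i : Fin n, ∑ j ∈ Finset.univ.filter (fun j => Γ.Adj i j),
        (y i - y j) ⬝ᵥ δ i = c14e Γ y i ⬝ᵥ δ i := by
      intro i
      rw [c14e_eq, c14dot_sum']
    rw [h1, h2, Finset.sum_congr rfl fun i _ => h3 i]
    ring
  -- per-node bound
  have hnode : ∀ i : Fin n, c14e Γ y i ⬝ᵥ δ i ≤ -(γmin / αmax) * c14sq (δ i) := by
    intro i
    have hAinv : (A i)⁻¹.mulVec (z i) = c14e Γ y i := by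
      rw [hz]
      rw [Matrix.mulVec_mulVec,
        Matrix.nonsing_inv_mul _ ((Matrix.isUnit_iff_isUnit_det _).1 (hinv i)),
        Matrix.one_mulVec]
    have hq := hquad i (z i)
    rw [enorm_sq, hAinv] at hq
    have hdot : c14e Γ y i ⬝ᵥ δ i = -(α i * (z i ⬝ᵥ c14e Γ y i)) := by
      rw [hδdef]
      simp only [dotProduct_neg, dotProduct_smul]
      rw [dotProduct_comm]
      simp [smul_eq_mul]
    have hsqδ : c14sq (δ i) = α i ^ 2 * c14sq (z i) := by
      rw [hδdef]; simp only [c14sq_neg, c14sq_smul]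
    have hαi := hα i
    have hαmax : 0 < αmax := lt_of_lt_of_le hαi (hαle i)
    have hγi : 0 ≤ γ i := le_trans hγ0 (hγle i)
    have hdiv : γmin / αmax ≤ γ i / α i := div_le_div₀ hγi (hγle i) hαi (hαle i)
    have hsqz : 0 ≤ c14sq (z i) := c14sq_nonneg _
    rw [hdot, hsqδ]
    have step1 : α i * (γ i * c14sq (z i)) ≤ α i * (z i ⬝ᵥ c14e Γ y i) :=
      mul_le_mul_of_nonneg_left hq (le_of_lt hαi)
    have step2 : (γmin / αmax) * (α i ^ 2 * c14sq (z i))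
        ≤ (γ i / α i) * (α i ^ 2 * c14sq (z i)) := by
      apply mul_le_mul_of_nonneg_right hdiv
      positivity
    have step3 : (γ i / α i) * (α i ^ 2 * c14sq (z i)) = α i * (γ i * c14sq (z i)) := by
      field_simp
    linarith
  -- sum of node bounds
  have hsum : ∑ i, c14e Γ y i ⬝ᵥ δ i ≤ -(γmin / αmax) * ∑ i, c14sq (δ i) := by
    rw [Finset.mul_sum]
    exact Finset.sum_le_sum fun i _ => hnode i
  -- laplacian bound on δ
  have hVδ : c14V Γ δ ≤ μ * ∑ i, c14sq (δ i) := hμb δ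
  -- assemble
  have hrw : ∑ i, c14sq (c14T Γ A α y i - y i) = ∑ i, c14sq (δ i) :=
    Finset.sum_congr rfl fun i _ => by rw [hTd i]
  rw [hrw]
  have hring : 2 * γmin / αmax = 2 * (γmin / αmax) := by ring
  rw [hring]
  nlinarith [hW, hCross, hsum, hVδ]

lemma c14sum_mulVec {m : ℕ} (M : Fin n → Matrix (Fin m) (Fin m) ℝ) (v : Fin m → ℝ) :
    (∑ i, M i).mulVec v = ∑ i, (M i).mulVec v := by
  funext a
  simp only [Matrix.mulVec, dotProduct, Matrix.sum_apply, Finset.sum_mul,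
    Finset.sum_apply]
  exact Finset.sum_comm

lemma c14Smat_mulVec (v : Fin d → ℝ) :
    (∑ i, (α i)⁻¹ • (A i)⁻¹).mulVec v = ∑ i, (α i)⁻¹ • (A i)⁻¹.mulVec v := by
  rw [c14sum_mulVec]
  exact Finset.sum_congr rfl fun i _ => Matrix.smul_mulVec _ _ _

lemma c14Smat_isUnit (hn : 0 < n) (hα : ∀ i, 0 < α i)
    (γ : Fin n → ℝ) (hγ : ∀ i, 0 < γ i)
    (hquad : ∀ (i : Fin n) (v : Fin d → ℝ), γ i * eucNorm v ^ 2 ≤ v ⬝ᵥ (A i)⁻¹.mulVec v) :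
    IsUnit (∑ i, (α i)⁻¹ • (A i)⁻¹) := by
  rw [← Matrix.mulVec_injective_iff_isUnit]
  have hker : ∀ w : Fin d → ℝ, (∑ i, (α i)⁻¹ • (A i)⁻¹).mulVec w = 0 → w = 0 := by
    intro w hw
    have hdot : w ⬝ᵥ (∑ i, (α i)⁻¹ • (A i)⁻¹).mulVec w = 0 := by
      rw [hw]; simp
    rw [c14Smat_mulVec, c14dot_sum] at hdot
    have hterm : ∀ i : Fin n, (α i)⁻¹ * (γ i * c14sq w) ≤ w ⬝ᵥ ((α i)⁻¹ • (A i)⁻¹.mulVec w) := by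
      intro i
      rw [dotProduct_smul, smul_eq_mul]
      have := hquad i w
      rw [enorm_sq] at this
      exact mul_le_mul_of_nonneg_left this (le_of_lt (inv_pos.2 (hα i)))
    have hsum : ∑ i, (α i)⁻¹ * (γ i * c14sq w) ≤ 0 := by
      rw [← hdot]
      exact Finset.sum_le_sum fun i _ => hterm i
    by_contra hne
    have hsq : 0 < c14sq w := by
      rcases (c14sq_nonneg w).lt_or_eq with h | h
      · exact h
      · exact absurd (c14sq_eq_zero h.symm) hne
    have : (0:ℝ) < ∑ i, (α i)⁻¹ * (γ i * c14sq w) := by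
      apply Finset.sum_pos
      · intro i _
        have := hα i; have := hγ i
        positivity
      · exact Finset.univ_nonempty_iff.mpr ⟨⟨0, hn⟩⟩
    linarith
  intro u v huv
  have := hker (u - v) (by rw [Matrix.mulVec_sub, huv, sub_self])
  exact sub_eq_zero.1 this

lemma c14T_fix (hinv : ∀ i, IsUnit (A i)) (hα : ∀ i, 0 < α i)
    (y : Fin n → Fin d → ℝ) (h : c14T Γ A α y = y) (i : Fin n) : c14e Γ y i = 0 := by
  have h1 : α i • (A i).mulVec (c14e Γ y i) = 0 := by
    have := congrFun h i
    rw [c14T] at this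
    have := sub_eq_self.1 this
    exact this
  have h2 : (A i).mulVec (c14e Γ y i) = 0 := by
    rcases smul_eq_zero.1 h1 with h | h
    · exact absurd h (ne_of_gt (hα i))
    · exact h
  have := congrArg (fun v => (A i)⁻¹.mulVec v) h2
  simpa [Matrix.mulVec_mulVec,
    Matrix.nonsing_inv_mul _ ((Matrix.isUnit_iff_isUnit_det _).1 (hinv i)),
    Matrix.one_mulVec] using this

lemma c14V_zero_iff (hconn : Γ.Connected) (y : Fin n → Fin d → ℝ)
    (h : c14V Γ y = 0) : ∀ i j, y i = y j := by
  have hterm : ∀ i j : Fin n, i < j → Γ.Adj i j → y i = y j := by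
    intro i j hij hadj
    have h1 : ∀ i ∈ (Finset.univ : Finset (Fin n)), 0 ≤
        ∑ j ∈ Finset.univ.filter (fun j => i < j ∧ Γ.Adj i j), c14sq (y i - y j) :=
      fun i _ => Finset.sum_nonneg fun j _ => c14sq_nonneg _
    have h2 := (Finset.sum_eq_zero_iff_of_nonneg h1).1 h i (Finset.mem_univ i)
    have h3 := (Finset.sum_eq_zero_iff_of_nonneg
      (fun j _ => c14sq_nonneg (y i - y j))).1 h2 j
      (Finset.mem_filter.2 ⟨Finset.mem_univ j, hij, hadj⟩)
    have := c14sq_eq_zero h3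
    exact sub_eq_zero.1 this
  have hadj : ∀ i j, Γ.Adj i j → y i = y j := by
    intro i j hadj
    rcases lt_or_gt_of_ne (Γ.ne_of_adj hadj) with hlt | hgt
    · exact hterm i j hlt hadj
    · exact (hterm j i hgt hadj.symm).symm
  exact conn_eq Γ hconn y hadj

lemma c14S_T (hinv : ∀ i, IsUnit (A i)) (hα : ∀ i, 0 < α i)
    (y : Fin n → Fin d → ℝ) : c14S A α (c14T Γ A α y) = c14S A α y := by
  have hterm : ∀ i : Fin n, (α i)⁻¹ • (A i)⁻¹.mulVec (c14T Γ A α y i)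
      = (α i)⁻¹ • (A i)⁻¹.mulVec (y i) - c14e Γ y i := by
    intro i
    rw [c14T, Matrix.mulVec_sub, smul_sub]
    congr 1
    rw [Matrix.mulVec_smul, Matrix.mulVec_mulVec,
      Matrix.nonsing_inv_mul _ ((Matrix.isUnit_iff_isUnit_det _).1 (hinv i)),
      Matrix.one_mulVec, smul_smul, inv_mul_cancel₀ (ne_of_gt (hα i)), one_smul]
  rw [c14S, Finset.sum_congr rfl fun i _ => hterm i, Finset.sum_sub_distrib,
    c14e_sum, sub_zero, c14S]

lemma c14sq_cont : Continuous (c14sq : (Fin d → ℝ) → ℝ) :=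
  continuous_finset_sum _ fun a _ => (continuous_apply a).pow 2

lemma c14N2_cont : Continuous (c14N2 : (Fin n → Fin d → ℝ) → ℝ) :=
  continuous_finset_sum _ fun i _ => c14sq_cont.comp (continuous_apply i)

lemma c14V_cont : Continuous (c14V Γ (d := d)) :=
  continuous_finset_sum _ fun i _ => continuous_finset_sum _ fun j _ =>
    c14sq_cont.comp ((continuous_apply i).sub (continuous_apply j))

lemma c14T_cont : Continuous (c14T Γ A α) :=
  continuous_pi fun i => (continuous_apply i).sub
    (((mulVec_cont (A i)).comp (c14e_cont Γ i)).const_smul (α i))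

lemma c14S_cont : Continuous (c14S A α) :=
  continuous_finset_sum _ fun i _ =>
    (((mulVec_cont ((A i)⁻¹)).comp (continuous_apply i)).const_smul ((α i)⁻¹))

lemma c14S_smul (c : ℝ) (y : Fin n → Fin d → ℝ) :
    c14S A α (c • y) = c • c14S A α y := by
  simp only [c14S, Finset.smul_sum]
  refine Finset.sum_congr rfl fun i _ => ?_
  rw [show (c • y) i = c • y i from rfl, Matrix.mulVec_smul, smul_comm]

lemma c14T_zero : c14T Γ A α 0 = 0 := by
  have := c14T_smul Γ A α 0 0
  simpa using this

lemma c14N2_eq_zero {y : Fin n → Fin d → ℝ} (h : c14N2 y = 0) : y = 0 := by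
  funext i
  have := c14sq_eq_zero ((Finset.sum_eq_zero_iff_of_nonneg
    (fun i _ => c14sq_nonneg (y i))).1 h i (Finset.mem_univ i))
  rw [this]; rfl

lemma c14sq_le_N2 (y : Fin n → Fin d → ℝ) (i : Fin n) : c14sq (y i) ≤ c14N2 y :=
  Finset.single_le_sum (fun i _ => c14sq_nonneg (y i)) (Finset.mem_univ i)

lemma c14coord_le_sq (v : Fin d → ℝ) (a : Fin d) : v a ^ 2 ≤ c14sq v :=
  Finset.single_le_sum (fun a _ => sq_nonneg (v a)) (Finset.mem_univ a)

end C14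

/-- In the graph consensus setting with `Γ` connected, invertible
weights `A_i` satisfying `yᵀ A_i⁻¹ y ≥ γ_i ‖y‖²`, largest Laplacian eigenvalue of
`Γ` at most `μ`, and `0 < α_max < 2 γ_min / μ`, the matrix `S = ∑_i α_i⁻¹ A_i⁻¹` is
invertible and the iterates converge to the consensus
`x* = S⁻¹ (∑_i α_i⁻¹ A_i⁻¹ x_i(0))`. -/
theorem consensus_convergence_invertible_weights
    (n d : ℕ) (hn : 0 < n) (hd : 0 < d)
    (Γ : SimpleGraph (Fin n)) [DecidableRel Γ.Adj] (hconn : Γ.Connected)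
    (A : Fin n → Matrix (Fin d) (Fin d) ℝ) (hinv : ∀ i, IsUnit (A i))
    (α : Fin n → ℝ) (hα : ∀ i, 0 < α i)
    (γ : Fin n → ℝ) (hγ : ∀ i, 0 < γ i)
    (hquad : ∀ (i : Fin n) (y : Fin d → ℝ),
      γ i * eucNorm y ^ 2 ≤ y ⬝ᵥ (A i)⁻¹.mulVec y)
    (γmin αmax : ℝ)
    (hγmin : γmin = Finset.univ.inf' (Finset.univ_nonempty_iff.mpr ⟨⟨0, hn⟩⟩) γ)
    (hαmax : αmax = Finset.univ.sup' (Finset.univ_nonempty_iff.mpr ⟨⟨0, hn⟩⟩) α)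
    (μ : ℝ) (hμ : 0 < μ)
    (hμbound : ∀ y : Fin n → Fin d → ℝ,
      ∑ i : Fin n, ∑ j ∈ Finset.univ.filter (fun j : Fin n => i < j ∧ Γ.Adj i j),
          eucNorm (y i - y j) ^ 2 ≤ μ * ∑ i : Fin n, eucNorm (y i) ^ 2)
    (hstep : αmax < 2 * γmin / μ)
    (x : ℕ → Fin n → Fin d → ℝ)
    (hupd : ∀ k i, x (k + 1) i =
      x k i - α i • (A i).mulVec (∑ j ∈ Γ.neighborFinset i, (x k i - x k j))) :
    IsUnit (∑ i : Fin n, (α i)⁻¹ • (A i)⁻¹) ∧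
    ∀ i : Fin n,
      Tendsto (fun k : ℕ => x k i) atTop
        (nhds ((∑ i : Fin n, (α i)⁻¹ • (A i)⁻¹)⁻¹.mulVec
          (∑ i : Fin n, (α i)⁻¹ • (A i)⁻¹.mulVec (x 0 i)))) := by
  classical
  have hγle : ∀ i, γmin ≤ γ i := by
    intro i; rw [hγmin]; exact Finset.inf'_le _ (Finset.mem_univ i)
  have hαle : ∀ i, α i ≤ αmax := by
    intro i; rw [hαmax]; exact Finset.le_sup' _ (Finset.mem_univ i)
  have hγ0 : 0 < γmin := by
    obtain ⟨i0, -, h⟩ := Finset.exists_mem_eq_inf'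
      (Finset.univ_nonempty_iff.mpr ⟨(⟨0, hn⟩ : Fin n)⟩) γ
    rw [hγmin, h]
    exact hγ i0
  have hαmax0 : 0 < αmax := lt_of_lt_of_le (hα ⟨0, hn⟩) (hαle ⟨0, hn⟩)
  have hcpos : 0 < 2 * γmin / αmax - μ := by
    have h1 : αmax * μ < 2 * γmin := by
      rw [lt_div_iff₀ hμ] at hstep; linarith
    rw [sub_pos, lt_div_iff₀ hαmax0]; linarith
  have hμb' : ∀ w : Fin n → Fin d → ℝ, c14V Γ w ≤ μ * c14N2 w := by
    intro w
    have := hμbound w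
    simpa only [enorm_sq, c14V, c14N2] using this
  have hunit : IsUnit (∑ i : Fin n, (α i)⁻¹ • (A i)⁻¹) :=
    c14Smat_isUnit A α hn hα γ hγ hquad
  refine ⟨hunit, ?_⟩
  set Smat : Matrix (Fin d) (Fin d) ℝ := ∑ i : Fin n, (α i)⁻¹ • (A i)⁻¹ with hSmat
  set b : Fin d → ℝ := ∑ i : Fin n, (α i)⁻¹ • (A i)⁻¹.mulVec (x 0 i) with hb
  set xstar : Fin d → ℝ := Smat⁻¹.mulVec b with hxstar
  set y : ℕ → Fin n → Fin d → ℝ := fun k i => x k i - xstar with hy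
  have hyT : ∀ k, y (k + 1) = c14T Γ A α (y k) := by
    intro k; funext i
    have he : c14e Γ (y k) i = c14e Γ (x k) i := by
      simp only [c14e]
      refine Finset.sum_congr rfl fun j _ => ?_
      show (x k i - xstar) - (x k j - xstar) = _
      abel
    show x (k+1) i - xstar = c14T Γ A α (y k) i
    rw [hupd k i, c14T, he]
    show _ = (x k i - xstar) - _
    rw [c14e]
    abel
  have hyS : ∀ k, c14S A α (y k) = 0 := by
    have h0 : c14S A α (y 0) = 0 := by
      have hsub : c14S A α (y 0) = c14S A α (x 0) - Smat.mulVec xstar := by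
        rw [c14S, c14S, hSmat, c14Smat_mulVec, ← Finset.sum_sub_distrib]
        refine Finset.sum_congr rfl fun i _ => ?_
        rw [show y 0 i = x 0 i - xstar from rfl, Matrix.mulVec_sub, smul_sub]
      have hSx : Smat.mulVec xstar = b := by
        rw [hxstar, Matrix.mulVec_mulVec,
          Matrix.mul_nonsing_inv _ ((Matrix.isUnit_iff_isUnit_det _).1 hunit),
          Matrix.one_mulVec]
      have hSb : c14S A α (x 0) = b := by rw [c14S, hb]
      rw [hsub, hSx, hSb, sub_self]
    intro k
    induction k with
    | zero => exact h0
    | succ k ih => rw [hyT k, c14S_T Γ A α hinv hα]; exact ih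
  have hKzero : ∀ w : Fin n → Fin d → ℝ, c14S A α w = 0 → c14V Γ w = 0 → w = 0 := by
    intro w hS hV
    have hco := c14V_zero_iff Γ hconn w hV
    have hall : Smat.mulVec (w ⟨0, hn⟩) = 0 := by
      rw [hSmat, c14Smat_mulVec, ← hS, c14S]
      exact Finset.sum_congr rfl fun i _ => by rw [hco ⟨0,hn⟩ i]
    have hinj : Function.Injective Smat.mulVec := Matrix.mulVec_injective_iff_isUnit.2 hunit
    have hw0 : w ⟨0, hn⟩ = 0 := hinj (by rw [hall, Matrix.mulVec_zero])
    funext i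
    rw [hco i ⟨0, hn⟩, hw0]
    rfl
  have hscale : ∀ w : Fin n → Fin d → ℝ, c14S A α w = 0 → w ≠ 0 →
      ∃ c : ℝ, 0 < c ∧ c14S A α (c • w) = 0 ∧ c14N2 (c • w) = 1 ∧
        c ^ 2 * c14N2 w = 1 := by
    intro w hS hne
    have hN : 0 < c14N2 w := by
      rcases (c14N2_nonneg w).lt_or_eq with h | h
      · exact h
      · exact absurd (c14N2_eq_zero h.symm) hne
    have hkey : ((Real.sqrt (c14N2 w))⁻¹) ^ 2 * c14N2 w = 1 := by
      rw [inv_pow, Real.sq_sqrt hN.le, inv_mul_cancel₀ (ne_of_gt hN)]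
    refine ⟨(Real.sqrt (c14N2 w))⁻¹, by positivity, ?_, ?_, hkey⟩
    · rw [c14S_smul, hS, smul_zero]
    · rw [c14N2_smul]; exact hkey
  set Sp : Set (Fin n → Fin d → ℝ) := {w | c14S A α w = 0} ∩ {w | c14N2 w = 1} with hSpdef
  have hSpc : IsCompact Sp := by
    apply Metric.isCompact_of_isClosed_isBounded
    · exact (isClosed_eq (c14S_cont A α) continuous_const).inter
        (isClosed_eq c14N2_cont continuous_const)
    · have hsub : Sp ⊆ Metric.closedBall 0 1 := by
        intro w hw
        rw [Metric.mem_closedBall, dist_zero_right]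
        rw [pi_norm_le_iff_of_nonneg zero_le_one]
        intro i
        rw [pi_norm_le_iff_of_nonneg zero_le_one]
        intro a
        rw [Real.norm_eq_abs, ← sq_le_one_iff_abs_le_one]
        calc w i a ^ 2 ≤ c14sq (w i) := c14coord_le_sq _ a
          _ ≤ c14N2 w := c14sq_le_N2 w i
          _ = 1 := hw.2
      exact (Metric.isBounded_closedBall (x := 0) (r := 1)).subset hsub
  have hV0 : c14V Γ (0 : Fin n → Fin d → ℝ) = 0 := by
    simp [c14V, c14sq]
  have hN20 : c14N2 (0 : Fin n → Fin d → ℝ) = 0 := by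
    simp [c14N2, c14sq]
  obtain ⟨r, hr0, hr1, m, hm, hcontr, hlow⟩ :
      ∃ r : ℝ, 0 ≤ r ∧ r < 1 ∧ ∃ m : ℝ, 0 < m ∧
        (∀ w, c14S A α w = 0 → c14V Γ (c14T Γ A α w) ≤ r * c14V Γ w) ∧
        (∀ w, c14S A α w = 0 → m * c14N2 w ≤ c14V Γ w) := by
    by_cases hne : Sp.Nonempty
    · obtain ⟨wm, hwmSp, hwm'⟩ := hSpc.exists_isMinOn hne (c14V_cont Γ).continuousOn
      have hwm : ∀ w ∈ Sp, c14V Γ wm ≤ c14V Γ w := fun w hw => hwm' hw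
      have hmpos : 0 < c14V Γ wm := by
        rcases (c14V_nonneg Γ wm).lt_or_eq with h | h
        · exact h
        · exfalso
          have h0 := hKzero wm hwmSp.1 h.symm
          rw [h0] at hwmSp
          have h1 : c14N2 (0 : Fin n → Fin d → ℝ) = 1 := hwmSp.2
          rw [hN20] at h1
          norm_num at h1
      have hVpos : ∀ w ∈ Sp, 0 < c14V Γ w := fun w hw => lt_of_lt_of_le hmpos (hwm w hw)
      obtain ⟨wr, hwrSp, hwr'⟩ := hSpc.exists_isMaxOn hne
        ((((c14V_cont Γ).comp (c14T_cont Γ A α)).continuousOn).div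
          (c14V_cont Γ).continuousOn (fun w hw => ne_of_gt (hVpos w hw)))
      have hwr : ∀ w ∈ Sp, c14V Γ (c14T Γ A α w) / c14V Γ w
          ≤ c14V Γ (c14T Γ A α wr) / c14V Γ wr := fun w hw => hwr' hw
      set r : ℝ := c14V Γ (c14T Γ A α wr) / c14V Γ wr with hrdef
      have hr0 : 0 ≤ r := div_nonneg (c14V_nonneg Γ _) (c14V_nonneg Γ _)
      have hTVwr : c14V Γ (c14T Γ A α wr) < c14V Γ wr := by
        have hdec := c14_decrease Γ A α hinv hα γ hquad γmin αmax hγle hαle hγ0.le μ hμb' wr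
        have hTne : c14T Γ A α wr ≠ wr := by
          intro hTeq
          have he0 : ∀ i, c14e Γ wr i = 0 := c14T_fix Γ A α hinv hα wr hTeq
          have hVz : c14V Γ wr = 0 := by
            rw [c14V_eq_dot]
            refine Finset.sum_eq_zero fun i _ => ?_
            rw [he0 i, dotProduct_zero]
          exact absurd hVz (ne_of_gt (hVpos wr hwrSp))
        have hpos : 0 < ∑ i, c14sq (c14T Γ A α wr i - wr i) := by
          have hex : ∃ i, c14T Γ A α wr i ≠ wr i := by
            by_contra hc
            push_neg at hc
            exact hTne (funext hc)
          obtain ⟨i0, hi0⟩ := hex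
          apply Finset.sum_pos' (fun i _ => c14sq_nonneg _)
          refine ⟨i0, Finset.mem_univ i0, ?_⟩
          rcases (c14sq_nonneg (c14T Γ A α wr i0 - wr i0)).lt_or_eq with h | h
          · exact h
          · exact absurd (sub_eq_zero.1 (c14sq_eq_zero h.symm)) hi0
        nlinarith [hdec, hcpos, hpos]
      have hr1 : r < 1 := by
        rw [hrdef, div_lt_one (hVpos wr hwrSp)]; exact hTVwr
      refine ⟨r, hr0, hr1, c14V Γ wm, hmpos, ?_, ?_⟩
      · intro w hS
        by_cases hw : w = 0
        · rw [hw, c14T_zero, hV0]; simp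
        · obtain ⟨c, hc, hcS, hcN, hcsq⟩ := hscale w hS hw
          have hmem : c • w ∈ Sp := ⟨hcS, hcN⟩
          have hle := hwr _ hmem
          have hVcw : 0 < c14V Γ (c • w) := hVpos _ hmem
          have h2 : c14V Γ (c14T Γ A α (c • w)) ≤ r * c14V Γ (c • w) :=
            (div_le_iff₀ hVcw).1 hle
          rw [c14T_smul, c14V_smul, c14V_smul] at h2
          have hc2 : 0 < c ^ 2 := by positivity
          have h3 : c ^ 2 * c14V Γ (c14T Γ A α w) ≤ c ^ 2 * (r * c14V Γ w) := by
            nlinarith [h2]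
          exact (mul_le_mul_iff_right₀ hc2).1 h3
      · intro w hS
        by_cases hw : w = 0
        · rw [hw, hV0, hN20]; simp
        · obtain ⟨c, hc, hcS, hcN, hcsq⟩ := hscale w hS hw
          have hmem : c • w ∈ Sp := ⟨hcS, hcN⟩
          have h1 := hwm _ hmem
          rw [c14V_smul] at h1
          calc c14V Γ wm * c14N2 w ≤ (c ^ 2 * c14V Γ w) * c14N2 w :=
                mul_le_mul_of_nonneg_right h1 (c14N2_nonneg w)
            _ = c14V Γ w * (c ^ 2 * c14N2 w) := by ring
            _ = c14V Γ w := by rw [hcsq, mul_one]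
    · have hK0 : ∀ w : Fin n → Fin d → ℝ, c14S A α w = 0 → w = 0 := by
        intro w hS
        by_contra hw
        obtain ⟨c, hc, hcS, hcN, -⟩ := hscale w hS hw
        exact hne ⟨c • w, hcS, hcN⟩
      refine ⟨0, le_refl 0, by norm_num, 1, one_pos, ?_, ?_⟩
      · intro w hS; rw [hK0 w hS, c14T_zero, hV0]; simp
      · intro w hS; rw [hK0 w hS, hV0, hN20]; simp
  have hVk : ∀ k, c14V Γ (y k) ≤ r ^ k * c14V Γ (y 0) := by
    intro k
    induction k with
    | zero => simp
    | succ k ih =>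
      rw [hyT k]
      calc c14V Γ (c14T Γ A α (y k)) ≤ r * c14V Γ (y k) := hcontr (y k) (hyS k)
        _ ≤ r * (r ^ k * c14V Γ (y 0)) := mul_le_mul_of_nonneg_left ih hr0
        _ = r ^ (k+1) * c14V Γ (y 0) := by ring
  intro i
  have hytend : Tendsto (fun k => y k i) atTop (nhds 0) := by
    rw [tendsto_pi_nhds]
    intro a
    have hbound : ∀ k, |y k i a| ≤ Real.sqrt (r ^ k * (c14V Γ (y 0) / m)) := by
      intro k
      have h2 : m * c14N2 (y k) ≤ r ^ k * c14V Γ (y 0) :=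
        le_trans (hlow (y k) (hyS k)) (hVk k)
      have h1 : (y k i a) ^ 2 ≤ r ^ k * (c14V Γ (y 0) / m) := by
        have h3 : c14N2 (y k) ≤ r ^ k * c14V Γ (y 0) / m := by
          rw [le_div_iff₀ hm]; linarith
        calc (y k i a)^2 ≤ c14sq (y k i) := c14coord_le_sq _ a
          _ ≤ c14N2 (y k) := c14sq_le_N2 _ i
          _ ≤ r ^ k * c14V Γ (y 0) / m := h3
          _ = r ^ k * (c14V Γ (y 0) / m) := by ring
      calc |y k i a| = Real.sqrt ((y k i a)^2) := (Real.sqrt_sq_eq_abs _).symm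
        _ ≤ _ := Real.sqrt_le_sqrt h1
    have hgt : Tendsto (fun k : ℕ => Real.sqrt (r ^ k * (c14V Γ (y 0) / m))) atTop
        (nhds 0) := by
      have h0 : Tendsto (fun k : ℕ => r ^ k * (c14V Γ (y 0) / m)) atTop (nhds 0) := by
        simpa using
          (tendsto_pow_atTop_nhds_zero_of_lt_one hr0 hr1).mul_const (c14V Γ (y 0) / m)
      have := (Real.continuous_sqrt.tendsto 0).comp h0
      simpa [Function.comp_def] using this
    exact squeeze_zero_norm (fun k => by
      simpa [Real.norm_eq_abs] using hbound k) hgt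
  have hxy : (fun k => x k i) = fun k => y k i + xstar := by
    funext k
    show x k i = x k i - xstar + xstar
    abel
  rw [hxy]
  have hfin := hytend.add (tendsto_const_nhds (x := xstar))
  simpa using hfin
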